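/- arXiv:2304.04562 — 3 statements merged into one kernel-verified Lean document; each statement's English description precedes it below -/
import Mathlib

section
/- Let $k$ be a field, let $d \geq 2$ and $N \geq 0$ be integers, and let $\varphi$ be a homogeneous polynomial of degree $d$ in $N+1$ variables over $k$. Let $f \in k[t]$ be an irreducible polynomial of degree $n \geq 2$ with $\gcd(n,d)=1$, and set $K := k[t]/(f)$, a simple extension of $k$ of degree $n$. Suppose that $\varphi$ is isotropic over $K$. Suppose moreover that every partition of $nd-n-d$ contains a part $a$ with $\gcd(a,d)=1$ and $n \nmid a$ (i.e., there are no bad partitions of $nd-n-d$). Then there exists a finite field extension $L/k$ with $\gcd([L:k],d)=1$, $n \nmid [L:k]$, and $[L:k] \leq nd-n-d$, such that $\varphi$ is isotropic over $L$. -/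
/-!
Lift a nontrivial zero of `φ` over `k[t]/(f)` to a vector `W` of polynomials of degree `< n`
with no common irreducible factor, so that `f ∣ φ(W)`. Let `e` be the largest degree of the
`W i`. If the vector of their degree-`e` coefficients is a zero of `φ`, then `φ` is already
isotropic over `k`. Otherwise `φ(W)` has degree `de`, so `φ(W) = f h` with `deg h = de - n`, and
the degrees of the irreducible factors of `h`, padded with `n - 1 - e` parts equal to `d`, form a
partition of `nd - n - d`. A good part cannot be `d`, so it is the degree of an irreducible
factor `p` of `h`, and `W mod p` is a nontrivial zero of `φ` over `k[t]/(p)`.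
-/

open Polynomial

theorem Nat.add_lt_mul_of_coprime {n d : ℕ} (hn : 2 ≤ n) (hd : 2 ≤ d) (h : Nat.gcd n d = 1) :
    n + d < n * d := by
  rcases (show 3 ≤ n ∨ 3 ≤ d by
    by_contra! h'
    obtain ⟨rfl, rfl⟩ : n = 2 ∧ d = 2 := by omega
    norm_num at h) with h3 | h3 <;> nlinarith

theorem Polynomial.coeff_prod_sum_of_natDegree_le {R ι : Type*} [CommSemiring R] (s : Finset ι)
    (f : ι → R[X]) (n : ι → ℕ) (h : ∀ i ∈ s, (f i).natDegree ≤ n i) :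
    (∏ i ∈ s, f i).coeff (∑ i ∈ s, n i) = ∏ i ∈ s, (f i).coeff (n i) := by
  induction s using Finset.cons_induction with
  | empty => simp
  | cons a s ha ih =>
    have hs : ∀ i ∈ s, (f i).natDegree ≤ n i := fun i hi => h i (Finset.mem_cons_of_mem hi)
    rw [Finset.prod_cons, Finset.sum_cons, Finset.prod_cons,
      coeff_mul_add_eq_of_natDegree_le (h a (Finset.mem_cons_self a s))
        ((natDegree_prod_le _ _).trans (Finset.sum_le_sum hs)), ih hs]

theorem Polynomial.exists_natDegree_max {R σ : Type*} [Semiring R] [Finite σ] {W : σ → R[X]}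
    (hW : W ≠ 0) : ∃ i, W i ≠ 0 ∧ ∀ j, (W j).natDegree ≤ (W i).natDegree := by
  obtain ⟨j, hj⟩ := Function.ne_iff.1 hW
  obtain ⟨i, hi, hmax⟩ := Set.exists_max_image {i | W i ≠ 0} (fun i => (W i).natDegree)
    (Set.toFinite _) ⟨j, hj⟩
  refine ⟨i, hi, fun l => ?_⟩
  by_cases hl : W l = 0
  · simp [hl]
  · exact hmax l hl

theorem Polynomial.exists_irreducible_dvd_of_partition {k : Type*} [Field k] {h : k[X]}
    (hh : h ≠ 0) {r c u : ℕ} (hc : 0 < c) (hu : 0 < u) (hsum : h.natDegree + r * c = u)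
    {Q : ℕ → Prop} (hQc : ¬ Q c)
    (hpart : ∀ m : Multiset ℕ, m ≠ 0 → (∀ a ∈ m, 0 < a) → m.sum = u →
      ∃ a ∈ m, Q a) :
    ∃ p : k[X], Irreducible p ∧ p ∣ h ∧ Q p.natDegree := by
  classical
  set F := UniqueFactorizationMonoid.normalizedFactors h
  have hF : (F.map natDegree).sum = h.natDegree := by
    rw [← natDegree_multiset_prod _ (UniqueFactorizationMonoid.zero_notMem_normalizedFactors h),
      natDegree_eq_of_degree_eq (degree_eq_degree_of_associated
        (UniqueFactorizationMonoid.prod_normalizedFactors hh))]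
  set m := F.map natDegree + Multiset.replicate r c
  have hm : m.sum = u := by simp [m, hF, hsum]
  have hpos : ∀ a ∈ m, 0 < a := fun a ha => by
    rcases Multiset.mem_add.1 ha with ha | ha
    · obtain ⟨p, hp, rfl⟩ := Multiset.mem_map.1 ha
      exact (UniqueFactorizationMonoid.irreducible_of_normalized_factor p hp).natDegree_pos
    · exact Multiset.eq_of_mem_replicate ha ▸ hc
  obtain ⟨a, ha, hQa⟩ := hpart m (by rintro h0; simp [h0] at hm; omega) hpos hm
  rcases Multiset.mem_add.1 ha with ha | ha
  · obtain ⟨p, hp, rfl⟩ := Multiset.mem_map.1 ha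
    exact ⟨p, UniqueFactorizationMonoid.irreducible_of_normalized_factor p hp,
      UniqueFactorizationMonoid.dvd_of_mem_normalizedFactors hp, hQa⟩
  · exact absurd (Multiset.eq_of_mem_replicate ha ▸ hQa) hQc

namespace MvPolynomial.IsHomogeneous

variable {R S σ : Type*} [CommSemiring R] [CommSemiring S] [Algebra R S] {φ : MvPolynomial σ R}
  {d : ℕ}

theorem aeval_smul (hφ : φ.IsHomogeneous d) (c : S) (x : σ → S) :
    MvPolynomial.aeval (c • x) φ = c ^ d * MvPolynomial.aeval x φ := by
  simp only [aeval_def, eval₂_eq, Finset.mul_sum]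
  refine Finset.sum_congr rfl fun m hm => ?_
  simp only [Pi.smul_apply, smul_eq_mul, mul_pow, Finset.prod_mul_distrib,
    Finset.prod_pow_eq_pow_sum, ← hφ.degree_eq_sum_deg_support hm]
  ring

theorem natDegree_aeval_le (hφ : φ.IsHomogeneous d) {e : ℕ} {W : σ → R[X]}
    (hW : ∀ i, (W i).natDegree ≤ e) : (MvPolynomial.aeval W φ).natDegree ≤ d * e := by
  rw [aeval_def, eval₂_eq]
  refine natDegree_sum_le_of_forall_le _ _ fun m hm => natDegree_mul_le.trans ?_
  rw [Polynomial.algebraMap_eq, natDegree_C, zero_add, hφ.degree_eq_sum_deg_support hm,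
    Finset.sum_mul]
  exact (natDegree_prod_le _ _).trans <| Finset.sum_le_sum fun i _ =>
    natDegree_pow_le.trans (Nat.mul_le_mul_left _ (hW i))

theorem coeff_aeval (hφ : φ.IsHomogeneous d) {e : ℕ} {W : σ → R[X]}
    (hW : ∀ i, (W i).natDegree ≤ e) :
    (MvPolynomial.aeval W φ).coeff (d * e) = eval (fun i => (W i).coeff e) φ := by
  rw [aeval_def, eval₂_eq, eval_eq, finsetSum_coeff]
  refine Finset.sum_congr rfl fun m hm => ?_
  rw [Polynomial.algebraMap_eq, Polynomial.coeff_C_mul, hφ.degree_eq_sum_deg_support hm,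
    Finset.sum_mul, coeff_prod_sum_of_natDegree_le _ _ _ fun i _ =>
      natDegree_pow_le.trans (Nat.mul_le_mul_left _ (hW i))]
  simp only [coeff_pow_of_natDegree_le (hW _)]

theorem natDegree_aeval_eq (hφ : φ.IsHomogeneous d) {e : ℕ} {W : σ → R[X]}
    (hW : ∀ i, (W i).natDegree ≤ e) (hv : eval (fun i => (W i).coeff e) φ ≠ 0) :
    (MvPolynomial.aeval W φ).natDegree = d * e :=
  natDegree_eq_of_le_of_coeff_ne_zero (hφ.natDegree_aeval_le hW) (hφ.coeff_aeval hW ▸ hv)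

end MvPolynomial.IsHomogeneous

section Isotropy

variable {k σ : Type*} [Field k]

def IsotropicOver (L : Type*) [CommRing L] [Algebra k L] (φ : MvPolynomial σ k) : Prop :=
  ∃ w : σ → L, w ≠ 0 ∧ MvPolynomial.eval w (MvPolynomial.map (algebraMap k L) φ) = 0

theorem isotropicOver_iff_aeval {L : Type*} [CommRing L] [Algebra k L] {φ : MvPolynomial σ k} :
    IsotropicOver L φ ↔ ∃ w : σ → L, w ≠ 0 ∧ MvPolynomial.aeval w φ = 0 := by
  simp only [IsotropicOver, MvPolynomial.eval_map, MvPolynomial.aeval_def]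

theorem AdjoinRoot.exists_mk_eq_natDegree_lt {f : k[X]} (hf : Irreducible f) (x : AdjoinRoot f) :
    ∃ g : k[X], AdjoinRoot.mk f g = x ∧ g.natDegree < f.natDegree := by
  have := Fact.mk hf
  obtain ⟨g, hg, rfl⟩ := (AdjoinRoot.powerBasis hf.ne_zero).exists_eq_aeval x
  exact ⟨g, (AdjoinRoot.aeval_eq g).symm, hg⟩

theorem AdjoinRoot.aeval_mk (f : k[X]) (W : σ → k[X]) (φ : MvPolynomial σ k) :
    MvPolynomial.aeval (fun i => AdjoinRoot.mk f (W i)) φ =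
      AdjoinRoot.mk f (MvPolynomial.aeval W φ) :=
  (MvPolynomial.comp_aeval_apply (f := W) (AdjoinRoot.mkₐ f) φ).symm

theorem isotropicOver_adjoinRoot_of_dvd {φ : MvPolynomial σ k} {p : k[X]} {W : σ → k[X]}
    (hW : ∃ i, ¬ p ∣ W i) (hpW : p ∣ MvPolynomial.aeval W φ) :
    IsotropicOver (AdjoinRoot p) φ := by
  refine isotropicOver_iff_aeval.2 ⟨fun i => AdjoinRoot.mk p (W i), ?_, ?_⟩
  · obtain ⟨i, hi⟩ := hW
    exact fun h => hi (AdjoinRoot.mk_eq_zero.1 (congr_fun h i))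
  · rw [AdjoinRoot.aeval_mk, AdjoinRoot.mk_eq_zero.2 hpW]

theorem isotropicOver_self {φ : MvPolynomial σ k} {v : σ → k} (hv : v ≠ 0)
    (hφv : MvPolynomial.eval v φ = 0) : IsotropicOver k φ :=
  ⟨v, hv, by rwa [Algebra.algebraMap_self, MvPolynomial.map_id]⟩

theorem IsotropicOver.exists_coprime_lift [Fintype σ] {φ : MvPolynomial σ k} {d : ℕ}
    (hφ : φ.IsHomogeneous d) {f : k[X]} (hf : Irreducible f)
    (hiso : IsotropicOver (AdjoinRoot f) φ) :
    ∃ W : σ → k[X], (∀ i, (W i).natDegree < f.natDegree) ∧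
      (∀ p : k[X], Irreducible p → ∃ i, ¬ p ∣ W i) ∧ f ∣ MvPolynomial.aeval W φ := by
  classical
  obtain ⟨w, hw0, hw⟩ := isotropicOver_iff_aeval.1 hiso
  choose V hVw hVdeg using fun i => AdjoinRoot.exists_mk_eq_natDegree_lt hf (w i)
  obtain ⟨j, hj⟩ : ∃ j, w j ≠ 0 := Function.ne_iff.1 hw0
  have hVj : V j ≠ 0 := by rintro h; rw [← hVw, h, map_zero] at hj; exact hj rfl
  set g := Finset.univ.gcd V
  have hg : g ≠ 0 := fun h => hVj (Finset.gcd_eq_zero_iff.1 h j (Finset.mem_univ j))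
  have hgV : ∀ i, g * (V i / g) = V i := fun i =>
    EuclideanDomain.mul_div_cancel' hg (Finset.gcd_dvd (Finset.mem_univ i))
  refine ⟨fun i => V i / g, fun i => ?_, fun p hp => ?_, ?_⟩
  · exact (natDegree_le_natDegree (degree_div_le _ _)).trans_lt (hVdeg i)
  · by_contra! hpV
    have := Finset.dvd_gcd (s := Finset.univ) fun i _ => hpV i
    rw [Finset.gcd_div_eq_one (Finset.mem_univ j) hVj] at this
    exact hp.not_isUnit (isUnit_of_dvd_one this)
  · have hfg : ¬ f ∣ g := fun h => (natDegree_le_of_dvd h hg).not_gt <|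
      (natDegree_le_of_dvd (Finset.gcd_dvd (Finset.mem_univ j)) hVj).trans_lt (hVdeg j)
    have hfV : f ∣ g ^ d * MvPolynomial.aeval (fun i => V i / g) φ := by
      rw [← hφ.aeval_smul, ← AdjoinRoot.mk_eq_zero, ← AdjoinRoot.aeval_mk]
      convert hw using 2
      ext i
      simp [hgV, hVw]
    exact (hf.prime.dvd_or_dvd hfV).resolve_left fun h => hfg (hf.prime.dvd_of_dvd_pow h)

theorem MvPolynomial.IsHomogeneous.exists_cofactor {φ : MvPolynomial σ k} {d e : ℕ}
    (hφ : φ.IsHomogeneous d) {W : σ → k[X]} (hW : ∀ i, (W i).natDegree ≤ e)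
    (hv : MvPolynomial.eval (fun i => (W i).coeff e) φ ≠ 0) {f : k[X]} (hf : f ≠ 0)
    (he : e < f.natDegree) (hfW : f ∣ MvPolynomial.aeval W φ) :
    ∃ h : k[X], h ≠ 0 ∧ MvPolynomial.aeval W φ = f * h ∧
      h.natDegree + (f.natDegree - 1 - e) * d = f.natDegree * d - f.natDegree - d := by
  obtain ⟨h, hfh⟩ := hfW
  have hh : h ≠ 0 := by
    rintro rfl
    rw [mul_zero] at hfh
    exact hv (by rw [← hφ.coeff_aeval hW, hfh, Polynomial.coeff_zero])
  refine ⟨h, hh, hfh, ?_⟩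
  have hdeg := hφ.natDegree_aeval_eq hW hv
  rw [hfh, natDegree_mul hf hh] at hdeg
  have : f.natDegree * d = d * e + (f.natDegree - 1 - e) * d + d := by
    conv_lhs => rw [show f.natDegree = e + (f.natDegree - 1 - e) + 1 by omega]
    ring
  omega

end Isotropy

/-- **Theorem (main).** Let `k` be a field, `d ≥ 2`, and `φ` a degree-`d` homogeneous
polynomial in `N+1` variables over `k`. Let `f ∈ k[t]` be irreducible of degree `n ≥ 2`
with `gcd(n,d) = 1`, and `K = k[t]/(f)`. If `φ` is isotropic over `K` and every partition
of `nd - n - d` contains a part `a` with `gcd(a,d) = 1` and `n ∤ a`, then `φ` is isotropic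
over some finite extension `L/k` with `gcd([L:k],d) = 1`, `n ∤ [L:k]`, and
`[L:k] ≤ nd - n - d`. -/
theorem main_theorem (k : Type) [Field k] (d N n : ℕ) (hd : 2 ≤ d) (hn : 2 ≤ n)
    (hgcd : Nat.gcd n d = 1)
    (φ : MvPolynomial (Fin (N + 1)) k) (hφ : φ.IsHomogeneous d)
    (f : Polynomial k) (hf : Irreducible f) (hfdeg : f.natDegree = n)
    (hiso : ∃ w : Fin (N + 1) → AdjoinRoot f, w ≠ 0 ∧
      MvPolynomial.eval w (MvPolynomial.map (algebraMap k (AdjoinRoot f)) φ) = 0)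
    (hpart : ∀ m : Multiset ℕ, m ≠ 0 → (∀ a ∈ m, 0 < a) → m.sum = n * d - n - d →
      ∃ a ∈ m, Nat.gcd a d = 1 ∧ ¬ n ∣ a) :
    ∃ (L : Type) (_ : Field L) (_ : Algebra k L),
      FiniteDimensional k L ∧
      Nat.gcd (Module.finrank k L) d = 1 ∧
      ¬ n ∣ Module.finrank k L ∧
      Module.finrank k L ≤ n * d - n - d ∧
      ∃ w : Fin (N + 1) → L, w ≠ 0 ∧
        MvPolynomial.eval w (MvPolynomial.map (algebraMap k L) φ) = 0 := by
  subst hfdeg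
  have hu := Nat.add_lt_mul_of_coprime hn hd hgcd
  obtain ⟨W, hWdeg, hWcop, hfW⟩ := IsotropicOver.exists_coprime_lift hφ hf hiso
  obtain ⟨i, hWi, hmax⟩ := exists_natDegree_max (W := W) fun h0 => by
    obtain ⟨j, hj⟩ := hWcop X irreducible_X
    simp [h0] at hj
  by_cases hv : MvPolynomial.eval (fun j => (W j).coeff (W i).natDegree) φ = 0
  · refine ⟨k, inferInstance, inferInstance, inferInstance, ?_⟩
    simp only [Module.finrank_self, Nat.gcd_one_left, Nat.dvd_one, true_and]
    exact ⟨by omega, by omega,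
      isotropicOver_self (Function.ne_iff.2 ⟨i, leadingCoeff_ne_zero.2 hWi⟩) hv⟩
  obtain ⟨h, hh, hfh, hsum⟩ := hφ.exists_cofactor hmax hv hf.ne_zero (hWdeg i) hfW
  obtain ⟨p, hp, hph, hpd, hpn⟩ := exists_irreducible_dvd_of_partition hh (by omega) (by omega)
    hsum (Q := fun a => Nat.gcd a d = 1 ∧ ¬ f.natDegree ∣ a)
    (fun hQ => absurd (Nat.gcd_self d ▸ hQ.1) (by omega)) hpart
  have := Fact.mk hp
  let B := AdjoinRoot.powerBasis hp.ne_zero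
  refine ⟨AdjoinRoot p, inferInstance, inferInstance, B.finite, ?_⟩
  rw [B.finrank, AdjoinRoot.powerBasis_dim]
  exact ⟨hpd, hpn, (natDegree_le_of_dvd hph hh).trans (by omega),
    isotropicOver_adjoinRoot_of_dvd (hWcop p hp) (hfh ▸ dvd_mul_of_dvd_right hph f)⟩
end

section
/- Let $k$ be a field, let $N \geq 0$, and let $\varphi$ be a homogeneous polynomial of degree $3$ in $N+1$ variables over $k$. Let $f \in k[t]$ be an irreducible polynomial of degree $4$, and set $K := k[t]/(f)$, a simple extension of $k$ of degree $4$. If $\varphi$ is isotropic over $K$, then there exists a finite field extension $L/k$ with $[L:k] \in \{1,5\}$ such that $\varphi$ is isotropic over $L$. -/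
/-!
Lift a nonzero zero of `φ` over `k[t]/(f)` to coprime polynomials `u₀, …, u_N` of degree `< 4`
(homogeneity lets us divide out their gcd). If `m` is the largest degree of the `uᵢ`, then `φ(u)`
has degree `≤ 3m` and its coefficient of `t^{3m}` is `φ` at the leading coefficients, so either `φ`
is isotropic over `k`, or `φ(u) = f q` with `deg q = 3m - 4 ∈ {2, 5}`. Some irreducible factor `r`
of `q` has degree `≤ 2` or `5`, and coprimality makes the images of the `uᵢ` a zero of `φ` over
`k[t]/(r)`. For `deg r = 5` this is the extension `L`; for `deg r ≤ 2` the same argument leaves a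
linear `q`, whose root gives a zero over `k`.
-/

open Polynomial

namespace Polynomial

theorem coeff_sup_natDegree_ne_zero {ι R : Type*} [Fintype ι] [Semiring R] {u : ι → R[X]}
    (hu : u ≠ 0) : (fun i => (u i).coeff (Finset.univ.sup fun i => (u i).natDegree)) ≠ 0 := by
  obtain ⟨j, hj⟩ := Function.ne_iff.mp hu
  set m := Finset.univ.sup fun i => (u i).natDegree
  have hle : ∀ i, (u i).natDegree ≤ m := fun i =>
    Finset.le_sup (f := fun i => (u i).natDegree) (Finset.mem_univ i)
  obtain ⟨i, -, hi⟩ := Finset.exists_mem_eq_sup Finset.univ ⟨j, Finset.mem_univ j⟩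
    fun i => (u i).natDegree
  change m = (u i).natDegree at hi
  have hmax : ∃ i, u i ≠ 0 ∧ (u i).natDegree = m := by
    by_cases h0 : u i = 0
    · refine ⟨j, hj, ?_⟩
      have := hle j
      rw [hi, h0, natDegree_zero] at this ⊢
      omega
    · exact ⟨i, h0, hi.symm⟩
  obtain ⟨i, hi0, hideg⟩ := hmax
  refine Function.ne_iff.mpr ⟨i, ?_⟩
  simpa [← hideg] using hi0

theorem exists_irreducible_dvd_two_mul_natDegree_le_or_eq {k : Type*} [Field k] {q : k[X]}
    (hq : 0 < q.natDegree) :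
    ∃ r, Irreducible r ∧ r ∣ q ∧ (2 * r.natDegree ≤ q.natDegree ∨ r.natDegree = q.natDegree) := by
  have hq0 : q ≠ 0 := ne_zero_of_natDegree_gt hq
  obtain ⟨r, hr, z, rfl⟩ :=
    WfDvdMonoid.exists_irreducible_factor (not_isUnit_of_natDegree_pos q hq) hq0
  have hz0 : z ≠ 0 := right_ne_zero_of_mul hq0
  rw [natDegree_mul hr.ne_zero hz0]
  by_cases hz : IsUnit z
  · exact ⟨r, hr, dvd_mul_right r z, Or.inr (by simp [natDegree_eq_zero_of_isUnit hz])⟩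
  by_cases h2 : 2 * r.natDegree ≤ r.natDegree + z.natDegree
  · exact ⟨r, hr, dvd_mul_right r z, Or.inl h2⟩
  obtain ⟨s, hs, hsz⟩ := WfDvdMonoid.exists_irreducible_factor hz hz0
  have := natDegree_le_of_dvd hsz hz0
  exact ⟨s, hs, hsz.trans (dvd_mul_left z r), Or.inl (by omega)⟩

section CommSemiring

variable {ι R : Type*} [CommSemiring R]

theorem coeff_prod_sum_of_natDegree_le_s1 (s : Finset ι) (f : ι → R[X]) (b : ι → ℕ)
    (h : ∀ i ∈ s, (f i).natDegree ≤ b i) :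
    (∏ i ∈ s, f i).coeff (∑ i ∈ s, b i) = ∏ i ∈ s, (f i).coeff (b i) := by
  classical
  induction s using Finset.induction_on with
  | empty => simp
  | insert a s ha ih =>
    have hs : ∀ i ∈ s, (f i).natDegree ≤ b i := fun i hi => h i (Finset.mem_insert_of_mem hi)
    have hprod : (∏ i ∈ s, f i).natDegree ≤ ∑ i ∈ s, b i :=
      (natDegree_prod_le _ _).trans (Finset.sum_le_sum hs)
    rw [Finset.prod_insert ha, Finset.prod_insert ha, Finset.sum_insert ha,
      coeff_mul_add_eq_of_natDegree_le (h a (Finset.mem_insert_self a s)) hprod, ih hs]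

variable {u : ι → R[X]} {m : ℕ}

theorem natDegree_prod_pow_le (s : Finset ι) (e : ι → ℕ) (hu : ∀ i ∈ s, (u i).natDegree ≤ m) :
    (∏ i ∈ s, u i ^ e i).natDegree ≤ (∑ i ∈ s, e i) * m := by
  rw [Finset.sum_mul]
  exact (natDegree_prod_le _ _).trans <| Finset.sum_le_sum fun i hi =>
    natDegree_pow_le.trans (Nat.mul_le_mul_left _ (hu i hi))

theorem coeff_prod_pow_of_natDegree_le (s : Finset ι) (e : ι → ℕ)
    (hu : ∀ i ∈ s, (u i).natDegree ≤ m) :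
    (∏ i ∈ s, u i ^ e i).coeff ((∑ i ∈ s, e i) * m) = ∏ i ∈ s, (u i).coeff m ^ e i := by
  rw [Finset.sum_mul, coeff_prod_sum_of_natDegree_le_s1 s _ _ fun i hi =>
    natDegree_pow_le.trans (Nat.mul_le_mul_left _ (hu i hi))]
  exact Finset.prod_congr rfl fun i hi => coeff_pow_of_natDegree_le (hu i hi)

end CommSemiring

end Polynomial

namespace MvPolynomial

def IsIsotropic {σ k : Type*} [CommSemiring k] (φ : MvPolynomial σ k) (A : Type*)
    [CommSemiring A] [Algebra k A] : Prop :=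
  ∃ w : σ → A, w ≠ 0 ∧ eval w (map (algebraMap k A) φ) = 0

section IsIsotropic

variable {σ k A B : Type*} [CommSemiring k] [CommSemiring A] [Algebra k A]
  [CommSemiring B] [Algebra k B] {φ : MvPolynomial σ k}

theorem isIsotropic_iff_aeval : φ.IsIsotropic A ↔ ∃ w : σ → A, w ≠ 0 ∧ aeval w φ = 0 := by
  simp only [IsIsotropic, eval_map, aeval_def]

theorem IsIsotropic.map (h : φ.IsIsotropic A) (g : A →ₐ[k] B) (hg : Function.Injective g) :
    φ.IsIsotropic B := by
  obtain ⟨w, hw, hφw⟩ := isIsotropic_iff_aeval.mp h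
  refine isIsotropic_iff_aeval.mpr ⟨fun i => g (w i), fun h0 => hw ?_, ?_⟩
  · exact _root_.funext fun i => hg ((congrFun h0 i).trans (map_zero g).symm)
  · rw [← comp_aeval_apply, hφw, map_zero]

end IsIsotropic

theorem IsHomogeneous.aeval_smul_s1 {σ R S : Type*} [CommSemiring R] [CommSemiring S] [Algebra R S]
    {φ : MvPolynomial σ R} {n : ℕ} (hφ : φ.IsHomogeneous n) (c : S) (x : σ → S) :
    MvPolynomial.aeval (c • x) φ = c ^ n * MvPolynomial.aeval x φ := by
  rw [aeval_def, aeval_def, eval₂_eq, eval₂_eq, Finset.mul_sum]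
  refine Finset.sum_congr rfl fun α hα => ?_
  simp_rw [Pi.smul_apply, smul_eq_mul, mul_pow, Finset.prod_mul_distrib, Finset.prod_pow_eq_pow_sum,
    ← hφ.degree_eq_sum_deg_support hα]
  ring

namespace IsHomogeneous

variable {σ R : Type*} [CommSemiring R] {φ : MvPolynomial σ R} {n m : ℕ} {u : σ → R[X]}

theorem natDegree_aeval_le_s1 (hφ : φ.IsHomogeneous n) (hu : ∀ i, (u i).natDegree ≤ m) :
    (MvPolynomial.aeval u φ).natDegree ≤ n * m := by
  rw [aeval_def, eval₂_eq]
  refine natDegree_sum_le_of_forall_le _ _ fun α hα => ?_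
  rw [Polynomial.algebraMap_eq, hφ.degree_eq_sum_deg_support hα]
  exact natDegree_C_mul_le _ _ |>.trans (natDegree_prod_pow_le _ _ fun i _ => hu i)

theorem coeff_aeval_mul (hφ : φ.IsHomogeneous n) (hu : ∀ i, (u i).natDegree ≤ m) :
    (MvPolynomial.aeval u φ).coeff (n * m) = eval (fun i => (u i).coeff m) φ := by
  rw [aeval_def, eval₂_eq, eval_eq, finsetSum_coeff]
  refine Finset.sum_congr rfl fun α hα => ?_
  rw [Polynomial.algebraMap_eq, Polynomial.coeff_C_mul, hφ.degree_eq_sum_deg_support hα,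
    coeff_prod_pow_of_natDegree_le _ _ fun i _ => hu i]

end IsHomogeneous

variable {σ k : Type*} [Field k] {φ : MvPolynomial σ k}

theorem IsIsotropic.of_adjoinRoot_natDegree_eq_one {r : k[X]} (hr : r.natDegree = 1)
    (h : φ.IsIsotropic (AdjoinRoot r)) : φ.IsIsotropic k := by
  have hr1 : r.degree = 1 := (degree_eq_iff_natDegree_eq_of_pos one_pos).mpr hr
  have := Fact.mk (irreducible_of_degree_eq_one hr1)
  obtain ⟨c, hc⟩ := exists_root_of_degree_eq_one hr1
  exact h.map (AdjoinRoot.liftAlgHom r (Algebra.ofId k k) c (by simpa using hc))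
    (RingHom.injective _)

theorem exists_dvd_aeval_of_isIsotropic_adjoinRoot {p : k[X]} (hp : p ≠ 0)
    (h : φ.IsIsotropic (AdjoinRoot p)) :
    ∃ v : σ → k[X], v ≠ 0 ∧ (∀ i, (v i).degree < p.degree) ∧ p ∣ aeval v φ := by
  obtain ⟨w, hw, hφw⟩ := isIsotropic_iff_aeval.mp h
  choose x hx using fun i => AdjoinRoot.mk_surjective (w i)
  have hmk : ∀ i, AdjoinRoot.mkₐ p (x i % p) = w i := fun i => by
    rw [← hx i]
    exact AdjoinRoot.mk_eq_mk.mpr ⟨-(x i / p), by rw [EuclideanDomain.mod_eq_sub_mul_div]; ring⟩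
  refine ⟨fun i => x i % p, fun h0 => hw (_root_.funext fun i => ?_),
    fun i => degree_mod_lt _ hp, ?_⟩
  · rw [← hmk i, congrFun h0 i, Pi.zero_apply, map_zero, Pi.zero_apply]
  · rw [← AdjoinRoot.mk_eq_zero]
    change AdjoinRoot.mkₐ p _ = 0
    simpa only [comp_aeval_apply, hmk] using hφw

theorem isIsotropic_adjoinRoot_of_dvd {r : k[X]} {u : σ → k[X]} (hu : ¬∀ i, r ∣ u i)
    (h : r ∣ aeval u φ) : φ.IsIsotropic (AdjoinRoot r) := by
  refine isIsotropic_iff_aeval.mpr ⟨fun i => AdjoinRoot.mk r (u i), fun h0 => hu ?_, ?_⟩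
  · exact fun i => AdjoinRoot.mk_eq_zero.mp (congrFun h0 i)
  · rw [← AdjoinRoot.mk_eq_zero] at h
    change AdjoinRoot.mkₐ r _ = 0 at h
    rwa [comp_aeval_apply] at h

variable [Fintype σ]

namespace IsHomogeneous

variable {n : ℕ}

theorem exists_coprime_dvd_aeval (hφ : φ.IsHomogeneous n) {p : k[X]} (hp : Irreducible p)
    (h : φ.IsIsotropic (AdjoinRoot p)) :
    ∃ u : σ → k[X], (∀ r, (∀ i, r ∣ u i) → IsUnit r) ∧ (∀ i, (u i).natDegree < p.natDegree) ∧
      p ∣ MvPolynomial.aeval u φ := by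
  classical
  obtain ⟨v, hv, hvdeg, hpv⟩ := exists_dvd_aeval_of_isIsotropic_adjoinRoot hp.ne_zero h
  obtain ⟨j, hj⟩ := Function.ne_iff.mp hv
  obtain ⟨u, hvu, hu⟩ := Finset.extract_gcd v ⟨j, Finset.mem_univ j⟩
  set g := Finset.univ.gcd v
  have hg : g ≠ 0 := fun h0 => hj (Finset.gcd_eq_zero_iff.mp h0 j (Finset.mem_univ j))
  have hv_eq : v = g • u := _root_.funext fun i => hvu i (Finset.mem_univ i)
  have hpg : ¬p ∣ g := fun hdvd =>
    (degree_le_of_dvd (hdvd.trans (Finset.gcd_dvd (Finset.mem_univ j))) hj).not_gt (hvdeg j)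
  refine ⟨u, fun r hr => isUnit_of_dvd_one (hu ▸ Finset.dvd_gcd fun i _ => hr i), fun i => ?_, ?_⟩
  · rcases eq_or_ne (u i) 0 with h0 | h0
    · simpa [h0] using hp.natDegree_pos
    · refine natDegree_lt_natDegree h0 ((degree_le_mul_left (u i) hg).trans_lt ?_)
      simpa only [hv_eq, Pi.smul_apply, smul_eq_mul, mul_comm g] using hvdeg i
  · rw [hv_eq, hφ.aeval_smul_s1] at hpv
    exact (hp.prime.dvd_or_dvd hpv).resolve_left fun hpg' => hpg (hp.prime.dvd_of_dvd_pow hpg')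

theorem isIsotropic_or_exists_eq_mul (hφ : φ.IsHomogeneous n) {p : k[X]} (hp : Irreducible p)
    (h : φ.IsIsotropic (AdjoinRoot p)) :
    φ.IsIsotropic k ∨ ∃ (u : σ → k[X]) (q : k[X]) (m : ℕ), (∀ r, (∀ i, r ∣ u i) → IsUnit r) ∧
      MvPolynomial.aeval u φ = p * q ∧ m < p.natDegree ∧ p.natDegree + q.natDegree = n * m := by
  obtain ⟨u, hu, hudeg, q, hq⟩ := hφ.exists_coprime_dvd_aeval hp h
  set m := Finset.univ.sup fun i => (u i).natDegree
  have hum : ∀ i, (u i).natDegree ≤ m := fun i =>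
    Finset.le_sup (f := fun i => (u i).natDegree) (Finset.mem_univ i)
  by_cases htop : (MvPolynomial.aeval u φ).coeff (n * m) = 0
  · left
    have hu0 : u ≠ 0 := fun h0 => not_isUnit_zero (hu 0 fun i => by simp [h0])
    refine isIsotropic_iff_aeval.mpr ⟨_, coeff_sup_natDegree_ne_zero hu0, ?_⟩
    rw [aeval_eq_eval, ← hφ.coeff_aeval_mul hum, htop]
  · right
    have hq0 : q ≠ 0 := by rintro rfl; simp [hq] at htop
    refine ⟨u, q, m, hu, hq, (Finset.sup_lt_iff hp.natDegree_pos).mpr fun i _ => hudeg i, ?_⟩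
    rw [← natDegree_mul hp.ne_zero hq0, ← hq]
    exact le_antisymm (hφ.natDegree_aeval_le_s1 hum) (le_natDegree_of_ne_zero htop)

theorem isIsotropic_of_adjoinRoot_natDegree_le_two (hφ : φ.IsHomogeneous 3) {p : k[X]}
    (hp : Irreducible p) (hp2 : p.natDegree ≤ 2) (h : φ.IsIsotropic (AdjoinRoot p)) :
    φ.IsIsotropic k := by
  obtain hk | ⟨u, q, m, hu, hpq, hm, hdeg⟩ := hφ.isIsotropic_or_exists_eq_mul hp h
  · exact hk
  have hq : q.natDegree = 1 := by have := hp.natDegree_pos; omega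
  have hq_iso : φ.IsIsotropic (AdjoinRoot q) := isIsotropic_adjoinRoot_of_dvd
    (fun h => not_isUnit_of_natDegree_pos q (by omega) (hu q h)) (hpq ▸ dvd_mul_left q p)
  exact hq_iso.of_adjoinRoot_natDegree_eq_one hq

theorem isIsotropic_or_exists_natDegree_eq_five (hφ : φ.IsHomogeneous 3) {f : k[X]}
    (hf : Irreducible f) (hfdeg : f.natDegree = 4) (h : φ.IsIsotropic (AdjoinRoot f)) :
    φ.IsIsotropic k ∨
      ∃ r : k[X], Irreducible r ∧ r.natDegree = 5 ∧ φ.IsIsotropic (AdjoinRoot r) := by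
  obtain hk | ⟨u, q, m, hu, hfq, hm, hdeg⟩ := hφ.isIsotropic_or_exists_eq_mul hf h
  · exact .inl hk
  obtain ⟨r, hr, hrq, hrdeg⟩ :=
    exists_irreducible_dvd_two_mul_natDegree_le_or_eq (q := q) (by omega)
  have hr_iso : φ.IsIsotropic (AdjoinRoot r) := isIsotropic_adjoinRoot_of_dvd
    (fun h => hr.not_isUnit (hu r h)) (hfq ▸ dvd_mul_of_dvd_right hrq f)
  obtain hr2 | hr5 : r.natDegree ≤ 2 ∨ r.natDegree = 5 := by omega
  · exact .inl (hφ.isIsotropic_of_adjoinRoot_natDegree_le_two hr hr2 hr_iso)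
  · exact .inr ⟨r, hr, hr5, hr_iso⟩

end IsHomogeneous

end MvPolynomial

/-- **Theorem.** Let `k` be a field and `φ` a cubic form in `N+1` variables over `k`.
If `φ` is isotropic over `K = k[t]/(f)` for some irreducible `f ∈ k[t]` of degree `4`,
then `φ` is isotropic over some finite extension `L/k` with `[L:k] ∈ {1,5}`. -/
theorem cubic_deg_four (k : Type) [Field k] (N : ℕ)
    (φ : MvPolynomial (Fin (N + 1)) k) (hφ : φ.IsHomogeneous 3)
    (f : Polynomial k) (hf : Irreducible f) (hfdeg : f.natDegree = 4)
    (hiso : ∃ w : Fin (N + 1) → AdjoinRoot f, w ≠ 0 ∧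
      MvPolynomial.eval w (MvPolynomial.map (algebraMap k (AdjoinRoot f)) φ) = 0) :
    ∃ (L : Type) (_ : Field L) (_ : Algebra k L),
      FiniteDimensional k L ∧
      (Module.finrank k L = 1 ∨ Module.finrank k L = 5) ∧
      ∃ w : Fin (N + 1) → L, w ≠ 0 ∧
        MvPolynomial.eval w (MvPolynomial.map (algebraMap k L) φ) = 0 := by
  obtain hk | ⟨r, hr, hr5, hr_iso⟩ := hφ.isIsotropic_or_exists_natDegree_eq_five hf hfdeg hiso
  · exact ⟨k, inferInstance, inferInstance, inferInstance, .inl (Module.finrank_self k), hk⟩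
  · have := Fact.mk hr
    let B := AdjoinRoot.powerBasis hr.ne_zero
    exact ⟨AdjoinRoot r, inferInstance, inferInstance, B.finite, .inr (B.finrank.trans hr5),
      hr_iso⟩
end

section
/- Let $d \geq 3$ and $n \geq 2$ be prime numbers with $d \neq n$. Let $u \in S_{d,n}$, where $S_{d,n} := \{ u \in \mathbb{Z} : u \geq 1, \ u < n(d-1), \ u \equiv -n \pmod{d} \}$, and let $[a_1,\dots,a_r]$ be a partition of $u$. Then there exists some $i \in \{1,\dots,r\}$ with $\gcd(a_i, nd) = 1$. -/
/-- **Lemma (partitions of elements of `S_{d,n}` are good when `d, n` are prime).**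
Let `d ≥ 3` and `n ≥ 2` be distinct primes, let `u ∈ S_{d,n}` (i.e. `1 ≤ u < n(d-1)`
and `u ≡ -n (mod d)`), and let `[a₁,…,a_r]` be a partition of `u`. Then some part `aᵢ`
satisfies `gcd(aᵢ, nd) = 1`. -/
theorem good_partition_primes (d n u : ℕ) (hd : 3 ≤ d) (hdp : Nat.Prime d)
    (hn : 2 ≤ n) (hnp : Nat.Prime n) (hne : d ≠ n)
    (hu1 : 1 ≤ u) (hu2 : u < n * (d - 1)) (hu3 : d ∣ u + n)
    (m : Multiset ℕ) (hm0 : m ≠ 0) (hmpos : ∀ a ∈ m, 0 < a) (hmsum : m.sum = u) :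
    ∃ a ∈ m, Nat.gcd a (n * d) = 1 := by
  by_contra h
  push_neg at h
  have hdn : ¬ d ∣ n := fun hdvd =>
    hne ((Nat.prime_dvd_prime_iff_eq hdp hnp).1 hdvd)
  have key : ∀ a ∈ m, d ∣ a ∨ n ∣ a := by
    intro a ha
    by_contra hc
    push_neg at hc
    have h1 : Nat.Coprime a d := (hdp.coprime_iff_not_dvd.2 hc.1).symm
    have h2 : Nat.Coprime a n := (hnp.coprime_iff_not_dvd.2 hc.2).symm
    exact h a ha (Nat.Coprime.mul_right h2 h1)
  set m1 := m.filter (d ∣ ·) with hm1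
  set m2 := m.filter (fun a => ¬ d ∣ a) with hm2
  have hsplit : m1 + m2 = m := Multiset.filter_add_not _ m
  have hd1 : d ∣ m1.sum := Multiset.dvd_sum (fun a ha => (Multiset.mem_filter.1 ha).2)
  have hn2 : n ∣ m2.sum := by
    refine Multiset.dvd_sum fun a ha => ?_
    obtain ⟨ham, hnd⟩ := Multiset.mem_filter.1 ha
    rcases key a ham with h'|h'
    · exact absurd h' hnd
    · exact h'
  obtain ⟨A, hA⟩ := hn2
  have hsum : m1.sum + m2.sum = u := by
    rw [← Multiset.sum_add, hsplit, hmsum]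
  have hdvd : d ∣ n * (A + 1) := by
    have h3 : d ∣ m1.sum + (m2.sum + n) := by
      have : m1.sum + (m2.sum + n) = u + n := by omega
      rw [this]; exact hu3
    have h4 : d ∣ m2.sum + n := (Nat.dvd_add_right hd1).mp h3
    have : m2.sum + n = n * (A + 1) := by rw [hA]; ring
    rwa [this] at h4
  have hdA : d ∣ A + 1 := (Nat.Coprime.dvd_of_dvd_mul_left
    (hdp.coprime_iff_not_dvd.2 hdn) hdvd)
  have hAd : d ≤ A + 1 := Nat.le_of_dvd (by omega) hdA
  have hmul : n * (d - 1) ≤ n * A := Nat.mul_le_mul_left n (by omega)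
  have : n * A ≤ u := by omega
  omega
end
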